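/- With H the natural entropy function and f(x,y) := (1−x)H(y/(1−x)) + (1−y)H(x/(1−y)) on the triangle Ω = {(x,y) : x,y ≥ 0, x+y ≤ 1}, one has f(x,y) ≤ 2·log φ − (2/3)(x − x₀)² for all (x,y) ∈ Ω, where φ = (1+√5)/2 and x₀ = (5−√5)/10. -/
import Mathlib
set_option maxHeartbeats 1000000


/-- The natural-logarithm entropy function (with the convention
`Real.log 0 = 0`, this agrees with the continuous extension `H 0 = H 1 = 0`). -/
noncomputable def H (x : ℝ) : ℝ := -(x * Real.log x) - (1 - x) * Real.log (1 - x)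

/-- The function f(x,y) = (1−x)H(y/(1−x)) + (1−y)H(x/(1−y)); with Lean's
convention `a / 0 = 0` this agrees with the continuous extension of the
formula to the whole triangle Ω. -/
noncomputable def f (x y : ℝ) : ℝ :=
  (1 - x) * H (y / (1 - x)) + (1 - y) * H (x / (1 - y))

lemma log_rat_le {r c : ℝ} (n : ℕ) (hr : 0 < r) (hc : 0 ≤ c)
    (h : r ≤ ∑ i ∈ Finset.range n, c ^ i / (Nat.factorial i)) : Real.log r ≤ c :=
  (Real.log_le_iff_le_exp hr).2 (h.trans (Real.sum_le_exp_of_nonneg hc n))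

lemma s5_lb : 2.2360679 ≤ Real.sqrt 5 := by
  nlinarith [Real.sq_sqrt (by norm_num : (5:ℝ) ≥ 0), Real.sqrt_nonneg 5]

lemma s5_ub : Real.sqrt 5 ≤ 2.2360680 := by
  nlinarith [Real.sq_sqrt (by norm_num : (5:ℝ) ≥ 0), Real.sqrt_nonneg 5]

lemma logphi_lb : 0.4812 ≤ Real.log ((1 + Real.sqrt 5)/2) := by
  rw [Real.le_log_iff_exp_le (by positivity)]
  have h := Real.exp_bound' (x := 0.4812) (by norm_num) (by norm_num) (n := 8) (by norm_num)
  have := s5_lb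
  norm_num [Finset.sum_range_succ, Nat.factorial] at h ⊢
  nlinarith [h]

lemma key2 {t c d : ℝ} (ht : 0 ≤ t) (hc : 0 < c) (hd : 0 < d) :
    t - c * d ≤ t * Real.log (t / d) - t * Real.log c := by
  rcases eq_or_lt_of_le ht with h | h
  · simp [← h]; positivity
  · have h1 : Real.log (c * d / t) ≤ c * d / t - 1 :=
      Real.log_le_sub_one_of_pos (by positivity)
    have h2 : Real.log (c * d / t) = Real.log c + Real.log d - Real.log t := by
      rw [Real.log_div (by positivity) (ne_of_gt h), Real.log_mul (ne_of_gt hc) (ne_of_gt hd)]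
    have h3 : Real.log (t / d) = Real.log t - Real.log d :=
      Real.log_div (ne_of_gt h) (ne_of_gt hd)
    have h4 : t * Real.log (c * d / t) ≤ c * d - t := by
      calc t * Real.log (c * d / t) ≤ t * (c * d / t - 1) :=
            mul_le_mul_of_nonneg_left h1 ht
        _ = c * d - t := by field_simp
    nlinarith [h4]

lemma cross {x y a b : ℝ} (hx : 0 ≤ x) (hy : 0 ≤ y) (hxy : x + y ≤ 1)
    (hx1 : x < 1) (hy1 : y < 1) (ha : 0 < a) (ha1 : a < 1) (hb : 0 < b) (hb1 : b < 1) :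
    f x y ≤ -(x * Real.log b) - y * Real.log a
      - (1 - x - y) * (Real.log (1 - a) + Real.log (1 - b)) := by
  have h1x : (0:ℝ) < 1 - x := by linarith
  have h1y : (0:ℝ) < 1 - y := by linarith
  have hs : 0 ≤ 1 - x - y := by linarith
  have e1 : (1 - x) * H (y / (1 - x))
      = -(y * Real.log (y / (1 - x))) - (1 - x - y) * Real.log ((1 - x - y) / (1 - x)) := by
    have hq : 1 - y / (1 - x) = (1 - x - y) / (1 - x) := by field_simp
    unfold H
    rw [hq]
    field_simp
  have e2 : (1 - y) * H (x / (1 - y))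
      = -(x * Real.log (x / (1 - y))) - (1 - x - y) * Real.log ((1 - x - y) / (1 - y)) := by
    have hq : 1 - x / (1 - y) = (1 - x - y) / (1 - y) := by field_simp; ring
    unfold H
    rw [hq]
    field_simp
  have k1 := key2 hx hb h1y
  have k2 := key2 hy ha h1x
  have k3 := key2 hs (show (0:ℝ) < 1 - a by linarith) h1x
  have k4 := key2 hs (show (0:ℝ) < 1 - b by linarith) h1y
  unfold f
  rw [e1, e2]
  nlinarith [k1, k2, k3, k4]

lemma ln_taylor {u : ℝ} (h : |u| ≤ 1/2) :
    u - u^2/2 + u^3/3 - 2*u^4 ≤ Real.log (1+u) ∧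
    Real.log (1+u) ≤ u - u^2/2 + u^3/3 + 2*u^4 := by
  have h1 : |(-u)| < 1 := by rw [abs_neg]; linarith [abs_nonneg u, h]
  have hb := Real.abs_log_sub_add_sum_range_le h1 3
  have hsum : (∑ i ∈ Finset.range 3, (-u) ^ (i + 1) / (i + 1))
      = -u + u^2/2 - u^3/3 := by
    norm_num [Finset.sum_range_succ]
    ring
  rw [hsum, show (1 : ℝ) - -u = 1 + u by ring, abs_neg] at hb
  have herr : |u|^4 / (1 - |u|) ≤ 2*u^4 := by
    have h2 : (0:ℝ) < 1 - |u| := by linarith [abs_nonneg u]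
    rw [div_le_iff₀ h2]
    have h4 : |u|^4 = u^4 := by
      rw [← abs_pow]; exact abs_of_nonneg (by positivity)
    nlinarith [pow_nonneg (abs_nonneg u) 4, h4]
  have := abs_le.1 hb
  constructor <;> nlinarith [this.1, this.2]

lemma polyC {x t s : ℝ} (h5 : s^2 = 5) (hxe : x = t + (5-s)/10)
    (htl : -(18639321/100000000) ≤ t) (htu : t ≤ 14360680/100000000)
    (hsl : 2.2360679 ≤ s) (hsu : s ≤ 2.2360680) :
    2/3*t^2 ≤ x*((t*(3+s)/2) - (t*(3+s)/2)^2/2 + (t*(3+s)/2)^3/3 - 2*(t*(3+s)/2)^4)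
      + (1-x)*(((-(t*(1+s)/2)) - (-(t*(1+s)/2))^2/2 + (-(t*(1+s)/2))^3/3 - 2*(-(t*(1+s)/2))^4)
             - ((-(t*(s-1)/2)) - (-(t*(s-1)/2))^2/2 + (-(t*(s-1)/2))^3/3 + 2*(-(t*(s-1)/2))^4)) := by
  subst hxe
  have hB : 0 ≤ (13/12 + s/20) + (-19/12 - s/60)*t + (-47/3 - 88*s/15)*t^2
      + (-33 - 21*s)*t^3 := by
    nlinarith [sq_nonneg t, mul_nonneg (sub_nonneg.2 htl) (sub_nonneg.2 hsl),
      mul_nonneg (sub_nonneg.2 htu) (sub_nonneg.2 hsu),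
      mul_nonneg (mul_nonneg (sub_nonneg.2 htl) (sub_nonneg.2 htl)) (sub_nonneg.2 htl),
      mul_nonneg (sub_nonneg.2 htl) (sub_nonneg.2 htu), sq_nonneg (t + 18639321/100000000),
      sq_nonneg (t - 14360680/100000000)]
  have hid : (t + (5-s)/10)*((t*(3+s)/2) - (t*(3+s)/2)^2/2 + (t*(3+s)/2)^3/3 - 2*(t*(3+s)/2)^4)
      + (1-(t + (5-s)/10))*(((-(t*(1+s)/2)) - (-(t*(1+s)/2))^2/2 + (-(t*(1+s)/2))^3/3 - 2*(-(t*(1+s)/2))^4)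
             - ((-(t*(s-1)/2)) - (-(t*(s-1)/2))^2/2 + (-(t*(s-1)/2))^3/3 + 2*(-(t*(s-1)/2))^4))
      - 2/3*t^2
      = t^2 * ((13/12 + s/20) + (-19/12 - s/60)*t + (-47/3 - 88*s/15)*t^2 + (-33 - 21*s)*t^3) := by
    linear_combination ((-1/20)*t - (3/80)*t^2 + (1/80)*t^2*s - (47/240)*t^3 - (1/24)*t^3*s
      - (1/240)*t^3*s^2 - (187/80)*t^4 - (59/240)*t^4*s - (3/80)*t^4*s^2 - (1/80)*t^4*s^3
      - (37/8)*t^5 - (3/2)*t^5*s + (1/8)*t^5*s^2) * h5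
  nlinarith [mul_nonneg (sq_nonneg t) hB, hid]

lemma regionC {x y : ℝ} (hx9 : 9/100 ≤ x) (hx42 : x ≤ 42/100)
    (hy : 0 ≤ y) (hxy : x + y ≤ 1) :
    f x y ≤ 2 * Real.log ((1 + Real.sqrt 5) / 2) -
      2 / 3 * (x - (5 - Real.sqrt 5) / 10) ^ 2 := by
  obtain ⟨s, hs_def⟩ : ∃ s : ℝ, Real.sqrt 5 = s := ⟨_, rfl⟩
  rw [hs_def]
  have h5 : s ^ 2 = 5 := by rw [← hs_def]; exact Real.sq_sqrt (by norm_num)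
  have hsl : 2.2360679 ≤ s := hs_def ▸ s5_lb
  have hsu : s ≤ 2.2360680 := hs_def ▸ s5_ub
  obtain ⟨t, ht_def⟩ : ∃ t : ℝ, x - (5 - s) / 10 = t := ⟨_, rfl⟩
  have hxe : x = t + (5-s)/10 := by rw [← ht_def]; ring
  have htl : -(18639321/100000000) ≤ t := by rw [← ht_def]; linarith
  have htu : t ≤ 14360680/100000000 := by rw [← ht_def]; linarith
  obtain ⟨b, hb_def⟩ : ∃ b : ℝ, b = x + 1 - 2*s/5 := ⟨_, rfl⟩
  have hb0 : 0 < b := by rw [hb_def]; linarith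
  have hb1 : b < 1 := by rw [hb_def]; linarith
  have h1b : (0:ℝ) < 1 - b := by linarith
  have h2b : (0:ℝ) < 2 - b := by linarith
  obtain ⟨a, ha_def⟩ : ∃ a : ℝ, a = (1 - b) / (2 - b) := ⟨_, rfl⟩
  have ha0 : 0 < a := by rw [ha_def]; positivity
  have ha1 : a < 1 := by rw [ha_def, div_lt_one h2b]; linarith
  have hcross := cross (by linarith : (0:ℝ) ≤ x) hy hxy (by linarith) (by linarith) ha0 ha1 hb0 hb1
  -- collapse the a-logs
  have hla : Real.log a = Real.log (1-b) - Real.log (2-b) := by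
    rw [ha_def]; exact Real.log_div h1b.ne' h2b.ne'
  have h1a : (1:ℝ) - a = (2-b)⁻¹ := by
    rw [ha_def]; field_simp; norm_num
  have hl1a : Real.log (1-a) = -Real.log (2-b) := by rw [h1a, Real.log_inv]
  have hbound2 : f x y ≤ -(x*Real.log b) - (1-x)*(Real.log (1-b) - Real.log (2-b)) := by
    calc f x y ≤ _ := hcross
      _ = -(x*Real.log b) - (1-x)*(Real.log (1-b) - Real.log (2-b)) := by
          rw [hla, hl1a]; ring
  -- |u| bounds
  have hub_abs : |t*(3+s)/2| ≤ 1/2 := by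
    rw [abs_le]; constructor <;> nlinarith [mul_nonneg (sub_nonneg.2 htl) (sub_nonneg.2 hsl),
      mul_nonneg (sub_nonneg.2 htu) (sub_nonneg.2 hsu),
      mul_nonneg (sub_nonneg.2 htl) (sub_nonneg.2 hsu),
      mul_nonneg (sub_nonneg.2 htu) (sub_nonneg.2 hsl)]
  have hu1_abs : |(-(t*(1+s)/2))| ≤ 1/2 := by
    rw [abs_le]; constructor <;> nlinarith [mul_nonneg (sub_nonneg.2 htl) (sub_nonneg.2 hsl),
      mul_nonneg (sub_nonneg.2 htu) (sub_nonneg.2 hsu),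
      mul_nonneg (sub_nonneg.2 htl) (sub_nonneg.2 hsu),
      mul_nonneg (sub_nonneg.2 htu) (sub_nonneg.2 hsl)]
  have hu2_abs : |(-(t*(s-1)/2))| ≤ 1/2 := by
    rw [abs_le]; constructor <;> nlinarith [mul_nonneg (sub_nonneg.2 htl) (sub_nonneg.2 hsl),
      mul_nonneg (sub_nonneg.2 htu) (sub_nonneg.2 hsu),
      mul_nonneg (sub_nonneg.2 htl) (sub_nonneg.2 hsu),
      mul_nonneg (sub_nonneg.2 htu) (sub_nonneg.2 hsl)]
  have hub_pos : (0:ℝ) < 1 + t*(3+s)/2 := by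
    have := abs_le.1 hub_abs; linarith [this.1]
  have hu1_pos : (0:ℝ) < 1 + (-(t*(1+s)/2)) := by
    have := abs_le.1 hu1_abs; linarith [this.1]
  have hu2_pos : (0:ℝ) < 1 + (-(t*(s-1)/2)) := by
    have := abs_le.1 hu2_abs; linarith [this.1]
  -- log factorizations
  have hp1 : (0:ℝ) < (1+s)/2 := by linarith
  have hc2 : Real.log ((3-s)/2) = -(2*Real.log ((1+s)/2)) := by
    have e1 : ((1+s)/2)^2 * ((3-s)/2) = 1 := by linear_combination ((1-s)/8) * h5
    have h0 : Real.log (((1+s)/2)^2) + Real.log ((3-s)/2) = 0 := by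
      rw [← Real.log_mul (by positivity) (by linarith : (0:ℝ) < (3-s)/2).ne', e1, Real.log_one]
    rw [Real.log_pow] at h0
    push_cast at h0
    linarith
  have hc1 : Real.log ((s-1)/2) = -Real.log ((1+s)/2) := by
    have e1 : ((1+s)/2) * ((s-1)/2) = 1 := by linear_combination (1/4) * h5
    have h0 : Real.log ((1+s)/2) + Real.log ((s-1)/2) = 0 := by
      rw [← Real.log_mul hp1.ne' (by linarith : (0:ℝ) < (s-1)/2).ne', e1, Real.log_one]
    linarith
  have hlogb : Real.log b = -(2*Real.log ((1+s)/2)) + Real.log (1 + t*(3+s)/2) := by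
    have hble : b = (3-s)/2 * (1 + t*(3+s)/2) := by
      rw [hb_def]; linear_combination (t/4) * h5 + ht_def
    rw [hble, Real.log_mul (by linarith : (0:ℝ) < (3-s)/2).ne' hub_pos.ne', hc2]
  have hlog1b : Real.log (1-b) = -Real.log ((1+s)/2) + Real.log (1 + (-(t*(1+s)/2))) := by
    have h1ble : 1 - b = (s-1)/2 * (1 + (-(t*(1+s)/2))) := by
      rw [hb_def]; linear_combination (t/4) * h5 - ht_def
    rw [h1ble, Real.log_mul (by linarith : (0:ℝ) < (s-1)/2).ne' hu1_pos.ne', hc1]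
  have hlog2b : Real.log (2-b) = Real.log ((1+s)/2) + Real.log (1 + (-(t*(s-1)/2))) := by
    have h2ble : 2 - b = (1+s)/2 * (1 + (-(t*(s-1)/2))) := by
      rw [hb_def]; linear_combination (t/4) * h5 - ht_def
    rw [h2ble, Real.log_mul (by linarith : (0:ℝ) < (1+s)/2).ne' hu2_pos.ne']
  -- Taylor bounds
  have T1 := (ln_taylor hub_abs).1
  have T2 := (ln_taylor hu1_abs).1
  have T3 := (ln_taylor hu2_abs).2
  have hP := polyC h5 hxe htl htu hsl hsu
  have hx0 : (0:ℝ) ≤ x := by linarith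
  have h1x0 : (0:ℝ) ≤ 1 - x := by linarith
  have m1 := mul_le_mul_of_nonneg_left T1 hx0
  have m2 := mul_le_mul_of_nonneg_left T2 h1x0
  have m3 := mul_le_mul_of_nonneg_left T3 h1x0
  have hgoal2 : (x - (5 - s)/10)^2 = t^2 := by rw [← ht_def]
  rw [hgoal2]
  rw [hlogb, hlog1b, hlog2b] at hbound2
  linarith [hbound2, m1, m2, m3, hP]

lemma lineBound {x y a b Cb Ca Cs : ℝ} (hx : 0 ≤ x) (hy : 0 ≤ y) (hxy : x + y ≤ 1)
    (hx1 : x < 1) (hy1 : y < 1) (ha : 0 < a) (ha1 : a < 1) (hb : 0 < b) (hb1 : b < 1)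
    (hCb : -Real.log b ≤ Cb) (hCa : -Real.log a ≤ Ca)
    (hCs : -Real.log (1-a) - Real.log (1-b) ≤ Cs) :
    f x y ≤ x*Cb + y*Ca + (1-x-y)*Cs := by
  have hc := cross hx hy hxy hx1 hy1 ha ha1 hb hb1
  have hs : (0:ℝ) ≤ 1 - x - y := by linarith
  have m1 := mul_le_mul_of_nonneg_left hCb hx
  have m2 := mul_le_mul_of_nonneg_left hCa hy
  have m3 := mul_le_mul_of_nonneg_left hCs hs
  nlinarith [hc, m1, m2, m3]

lemma neg_log_rat {p q c : ℝ} (hp : 0 < p) (hq : 0 < q) (h : Real.log (q/p) ≤ c) :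
    -Real.log (p/q) ≤ c := by
  have e : Real.log (p/q) = - Real.log (q/p) := by
    rw [← Real.log_inv, inv_div]
  rw [e, neg_neg]
  exact h

-- numeric log bounds
lemma nl1 : -Real.log ((2:ℝ)/25) ≤ 2.5258 := by
  apply neg_log_rat (by norm_num) (by norm_num)
  apply log_rat_le 20 (by norm_num) (by norm_num)
  norm_num [Finset.sum_range_succ, Nat.factorial]
lemma nl2 : -Real.log ((23:ℝ)/48) ≤ 0.7358 := by
  apply neg_log_rat (by norm_num) (by norm_num)
  apply log_rat_le 12 (by norm_num) (by norm_num)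
  norm_num [Finset.sum_range_succ, Nat.factorial]
lemma nl3 : -Real.log ((25:ℝ)/48) ≤ 0.6524 := by
  apply neg_log_rat (by norm_num) (by norm_num)
  apply log_rat_le 12 (by norm_num) (by norm_num)
  norm_num [Finset.sum_range_succ, Nat.factorial]
lemma nl4 : -Real.log ((23:ℝ)/25) ≤ 0.0834 := by
  apply neg_log_rat (by norm_num) (by norm_num)
  apply log_rat_le 8 (by norm_num) (by norm_num)
  norm_num [Finset.sum_range_succ, Nat.factorial]
lemma nl5 : -Real.log ((3:ℝ)/5) ≤ 0.5109 := by
  apply neg_log_rat (by norm_num) (by norm_num)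
  apply log_rat_le 12 (by norm_num) (by norm_num)
  norm_num [Finset.sum_range_succ, Nat.factorial]
lemma nl6 : -Real.log ((2:ℝ)/7) ≤ 1.2528 := by
  apply neg_log_rat (by norm_num) (by norm_num)
  apply log_rat_le 16 (by norm_num) (by norm_num)
  norm_num [Finset.sum_range_succ, Nat.factorial]
lemma nl7 : -Real.log ((5:ℝ)/7) ≤ 0.3365 := by
  apply neg_log_rat (by norm_num) (by norm_num)
  apply log_rat_le 10 (by norm_num) (by norm_num)
  norm_num [Finset.sum_range_succ, Nat.factorial]
lemma nl8 : -Real.log ((2:ℝ)/5) ≤ 0.9163 := by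
  apply neg_log_rat (by norm_num) (by norm_num)
  apply log_rat_le 14 (by norm_num) (by norm_num)
  norm_num [Finset.sum_range_succ, Nat.factorial]
lemma nl9 : -Real.log ((409:ℝ)/500) ≤ 0.2011 := by
  apply neg_log_rat (by norm_num) (by norm_num)
  apply log_rat_le 8 (by norm_num) (by norm_num)
  norm_num [Finset.sum_range_succ, Nat.factorial]
lemma nl10 : -Real.log ((91:ℝ)/591) ≤ 1.8712 := by
  apply neg_log_rat (by norm_num) (by norm_num)
  apply log_rat_le 16 (by norm_num) (by norm_num)
  norm_num [Finset.sum_range_succ, Nat.factorial]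
lemma nl11 : -Real.log ((500:ℝ)/591) ≤ 0.16721 := by
  apply neg_log_rat (by norm_num) (by norm_num)
  apply log_rat_le 8 (by norm_num) (by norm_num)
  norm_num [Finset.sum_range_succ, Nat.factorial]
lemma nl12 : -Real.log ((91:ℝ)/500) ≤ 1.70399 := by
  apply neg_log_rat (by norm_num) (by norm_num)
  apply log_rat_le 16 (by norm_num) (by norm_num)
  norm_num [Finset.sum_range_succ, Nat.factorial]

theorem stmt19 (x y : ℝ) (hx : 0 ≤ x) (hy : 0 ≤ y) (hxy : x + y ≤ 1) :
    f x y ≤ 2 * Real.log ((1 + Real.sqrt 5) / 2) -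
      2 / 3 * (x - (5 - Real.sqrt 5) / 10) ^ 2 := by
  have h5 : (Real.sqrt 5)^2 = 5 := Real.sq_sqrt (by norm_num)
  have hsl := s5_lb
  have hsu := s5_ub
  have hL := logphi_lb
  by_cases hy1 : y = 1
  · have hx0 : x = 0 := by linarith
    subst hy1; subst hx0
    have hf : f 0 1 = 0 := by norm_num [f, H]
    rw [hf]
    nlinarith [hL, hsl, hsu, h5]
  by_cases hx1 : x = 1
  · have hy0 : y = 0 := by linarith
    subst hx1; subst hy0
    have hf : f 1 0 = 0 := by norm_num [f, H]
    rw [hf]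
    nlinarith [hL, hsl, hsu, h5]
  have hx1' : x < 1 := lt_of_le_of_ne (by linarith) hx1
  have hy1' : y < 1 := lt_of_le_of_ne (by linarith) hy1
  rcases le_or_gt x (9/100) with hA | hA
  · -- region A
    have hlb := lineBound (a := 23/48) (b := 2/25) (Cb := 2.5258) (Ca := 0.7358) (Cs := 0.7358)
      hx hy hxy hx1' hy1' (by norm_num) (by norm_num) (by norm_num) (by norm_num)
      nl1 nl2 (by norm_num; linarith [nl3, nl4])
    nlinarith [hlb, hL, hsl, hsu, h5, mul_nonneg hx (by linarith : (0:ℝ) ≤ 9/100 - x)]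
  rcases le_or_gt x (42/100) with hC | hC
  · exact regionC (by linarith) hC hy hxy
  rcases le_or_gt x (585/1000) with hB | hB
  · -- region B1
    have hlb := lineBound (a := 2/7) (b := 3/5) (Cb := 0.5109) (Ca := 1.2528) (Cs := 1.2528)
      hx hy hxy hx1' hy1' (by norm_num) (by norm_num) (by norm_num) (by norm_num)
      nl5 nl6 (by norm_num; linarith [nl7, nl8])
    nlinarith [hlb, hL, hsl, hsu, h5,
      mul_nonneg (by linarith : (0:ℝ) ≤ x - 42/100) (by linarith : (0:ℝ) ≤ 585/1000 - x)]
  · -- region B2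
    have hlb := lineBound (a := 91/591) (b := 409/500) (Cb := 0.2011) (Ca := 1.8712) (Cs := 1.8712)
      hx hy hxy hx1' hy1' (by norm_num) (by norm_num) (by norm_num) (by norm_num)
      nl9 nl10 (by norm_num; linarith [nl11, nl12])
    nlinarith [hlb, hL, hsl, hsu, h5,
      mul_nonneg (by linarith : (0:ℝ) ≤ x - 585/1000) (by linarith : (0:ℝ) ≤ 1 - x)]
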